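/- (Maupertuis principle) Solutions q(t) of the Newton equation ∇_{q̇} q̇ = −grad V on a Riemannian manifold (M,g) with fixed energy (1/2)⟨q̇,q̇⟩ + V(q) = h, after the time reparametrization dτ = (h − V) dt, become geodesics q(τ) of the Jacobi metric g_J = (h − V)g with unit kinetic energy (1/2)⟨q',q'⟩_J = 1. -/

import Mathlib

open scoped BigOperators

noncomputable def pd {n : ℕ} (i : Fin n) (φ : (Fin n → ℝ) → ℝ) (x : Fin n → ℝ) : ℝ :=
  fderiv ℝ φ x (Pi.single i 1)

noncomputable def christoffel {n : ℕ} (g ginv : (Fin n → ℝ) → Matrix (Fin n) (Fin n) ℝ)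
    (k i j : Fin n) (x : Fin n → ℝ) : ℝ :=
  (1 / 2) * ∑ l, ginv x k l *
    (pd i (fun y => g y l j) x + pd j (fun y => g y l i) x - pd l (fun y => g y i j) x)

noncomputable def ip {n : ℕ} (g : (Fin n → ℝ) → Matrix (Fin n) (Fin n) ℝ)
    (x u v : Fin n → ℝ) : ℝ :=
  ∑ i, ∑ j, g x i j * u i * v j

lemma clm_apply_eq_sum {n : ℕ} (L : (Fin n → ℝ) →L[ℝ] ℝ) (v : Fin n → ℝ) :
    L v = ∑ i, v i * L (Pi.single i 1) := by
  have hv : v = ∑ i, v i • (Pi.single i 1 : Fin n → ℝ) := by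
    ext j
    simp [Finset.sum_apply, Pi.single_apply]
  conv_lhs => rw [hv]
  rw [map_sum]
  simp [smul_eq_mul]

lemma pd_mul {n : ℕ} (i : Fin n) (φ ψ : (Fin n → ℝ) → ℝ) (x : Fin n → ℝ)
    (hφ : DifferentiableAt ℝ φ x) (hψ : DifferentiableAt ℝ ψ x) :
    pd i (fun y => φ y * ψ y) x = pd i φ x * ψ x + φ x * pd i ψ x := by
  unfold pd
  rw [fderiv_fun_mul hφ hψ]
  simp only [ContinuousLinearMap.add_apply, ContinuousLinearMap.smul_apply, smul_eq_mul]
  ring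

lemma pd_const_sub {n : ℕ} (i : Fin n) (V : (Fin n → ℝ) → ℝ) (h : ℝ) (x : Fin n → ℝ)
    (hV : DifferentiableAt ℝ V x) :
    pd i (fun y => h - V y) x = - pd i V x := by
  unfold pd
  rw [(hV.hasFDerivAt.const_sub h).fderiv]
  simp

lemma one_matrix_sum {n : ℕ} (k : Fin n) (w : Fin n → ℝ) :
    ∑ j, ((1:Matrix (Fin n) (Fin n) ℝ) k j) * w j = w k := by
  simp [Matrix.one_apply]

/-- Maupertuis principle: solutions of `∇_{q̇} q̇ = −grad V` with energy
`(1/2)⟨q̇,q̇⟩ + V = h`, after the time reparametrisation `dτ = (h−V)dt`, become geodesics of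
the Jacobi metric `g_J = (h−V)g` with unit kinetic energy `(1/2)⟨q',q'⟩_J = 1`. -/
theorem maupertuis_principle {n : ℕ}
    (g ginv : (Fin n → ℝ) → Matrix (Fin n) (Fin n) ℝ)
    (V : (Fin n → ℝ) → ℝ) (h : ℝ)
    (hg : ∀ i j, ContDiff ℝ (⊤ : ℕ∞) fun x => g x i j)
    (hgsym : ∀ x i j, g x i j = g x j i)
    (hinv : ∀ x, g x * ginv x = 1 ∧ ginv x * g x = 1)
    (hV : ContDiff ℝ (⊤ : ℕ∞) V)
    (q : ℝ → Fin n → ℝ) (hq : ContDiff ℝ 2 q)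
    (hreg : ∀ t, V (q t) < h)
    (hNewton : ∀ t k,
      deriv (fun s => deriv (fun s' => q s' k) s) t
        + ∑ i, ∑ j, christoffel g ginv k i j (q t) *
            deriv (fun s => q s i) t * deriv (fun s => q s j) t
      = -∑ l, ginv (q t) k l * pd l V (q t))
    (henergy : ∀ t,
      (1 / 2) * ip g (q t) (fun i => deriv (fun s => q s i) t)
          (fun i => deriv (fun s => q s i) t) + V (q t) = h)
    (τ σ : ℝ → ℝ) (hτ : ContDiff ℝ 2 τ) (hσ : ContDiff ℝ 2 σ)
    (hτ' : ∀ t, deriv τ t = h - V (q t)) (hστ : ∀ t, σ (τ t) = t) :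
    ∀ t,
      (∀ k,
        deriv (fun u => deriv (fun u' => q (σ u') k) u) (τ t)
          + ∑ i, ∑ j,
              christoffel (fun y => (h - V y) • g y) (fun y => (h - V y)⁻¹ • ginv y)
                k i j (q (σ (τ t))) *
                deriv (fun u => q (σ u) i) (τ t) * deriv (fun u => q (σ u) j) (τ t)
        = 0) ∧
      (1 / 2) * ip (fun y => (h - V y) • g y) (q (σ (τ t)))
          (fun i => deriv (fun u => q (σ u) i) (τ t))
          (fun i => deriv (fun u => q (σ u) i) (τ t))
        = 1 := by
  intro t
  -- basic differentiability facts
  have hq1 : Differentiable ℝ q := hq.differentiable (by norm_num)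
  have hqi : ∀ i, ContDiff ℝ 2 fun s => q s i := fun i => contDiff_pi.mp hq i
  have hqi1 : ∀ i, Differentiable ℝ fun s => q s i :=
    fun i => (hqi i).differentiable (by norm_num)
  have hqi' : ∀ i, ContDiff ℝ 1 (deriv fun s => q s i) := by
    intro i
    have h2 : ContDiff ℝ ((1:ℕ)+1) fun s => q s i := by exact_mod_cast hqi i
    exact (contDiff_succ_iff_deriv.mp h2).2.2
  have hσ1 : Differentiable ℝ σ := hσ.differentiable (by norm_num)
  have hτ1 : Differentiable ℝ τ := hτ.differentiable (by norm_num)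
  have hσ' : ContDiff ℝ 1 (deriv σ) := by
    have h2 : ContDiff ℝ ((1:ℕ)+1) σ := by exact_mod_cast hσ
    exact (contDiff_succ_iff_deriv.mp h2).2.2
  have hVd : Differentiable ℝ V := hV.differentiable (by simp)
  have hWpos : 0 < h - V (q t) := sub_pos.mpr (hreg t)
  have hWne : h - V (q t) ≠ 0 := ne_of_gt hWpos
  -- abbreviations
  set c : ℝ := (h - V (q t))⁻¹ with hc
  set v : Fin n → ℝ := fun i => deriv (fun s => q s i) t with hvdef
  set A : Fin n → ℝ := fun i => pd i V (q t) with hA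
  set S : ℝ := ∑ i, v i * A i with hS
  -- derivative of σ at τ t
  have hσd : deriv σ (τ t) * (h - V (q t)) = 1 := by
    have hid : (fun s => σ (τ s)) = fun s => s := funext hστ
    have h1 : deriv (fun s => σ (τ s)) t = deriv σ (τ t) * deriv τ t :=
      deriv_comp t (hσ1 (τ t)) (hτ1 t)
    rw [hid, deriv_id''] at h1
    rw [← hτ' t, ← h1]
  have hσdval : deriv σ (τ t) = c := by
    rw [hc]
    field_simp at hσd ⊢
    linarith [hσd]
  -- first derivatives of reparametrised curve (as functions of u)
  have hVel_fun : ∀ i, ∀ u, deriv (fun u' => q (σ u') i) u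
      = deriv (fun s => q s i) (σ u) * deriv σ u := by
    intro i u
    exact deriv_comp u ((hqi1 i) (σ u)) (hσ1 u)
  have hVel : ∀ i, deriv (fun u => q (σ u) i) (τ t) = v i * c := by
    intro i
    rw [hVel_fun i (τ t), hστ t, hσdval]
  -- velocity components of q
  have hvq : ∀ i, deriv q t i = v i := by
    intro i
    exact ((hasDerivAt_pi.mp (hq1 t).hasDerivAt i).deriv).symm
  have hVq : HasDerivAt (fun s => V (q s)) S t := by
    have h1 : HasDerivAt (fun s => V (q s)) (fderiv ℝ V (q t) (deriv q t)) t :=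
      (hVd (q t)).hasFDerivAt.comp_hasDerivAt t (hq1 t).hasDerivAt
    have h2 : fderiv ℝ V (q t) (deriv q t) = S := by
      rw [clm_apply_eq_sum]
      exact Finset.sum_congr rfl fun i _ => by rw [hvq i]; rfl
    rwa [h2] at h1
  have hτfun : deriv τ = fun s => h - V (q s) := funext hτ'
  have hτ'' : deriv (deriv τ) t = -S := by
    rw [hτfun]
    exact (hVq.const_sub h).deriv
  -- second derivative of σ at τ t
  have hσ'' : deriv (deriv σ) (τ t) = c * c * c * S := by
    have hconst : (fun s => deriv σ (τ s) * deriv τ s) = fun _ => (1:ℝ) := by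
      funext s
      have hid : (fun r => σ (τ r)) = fun r => r := funext hστ
      have h1 : deriv (fun r => σ (τ r)) s = deriv σ (τ s) * deriv τ s :=
        deriv_comp s (hσ1 (τ s)) (hτ1 s)
      rw [hid, deriv_id''] at h1
      exact h1.symm
    have hd0 : deriv (fun s => deriv σ (τ s) * deriv τ s) t = 0 := by
      rw [hconst]; simp
    have hdompA : DifferentiableAt ℝ (fun s => deriv σ (τ s)) t :=
      DifferentiableAt.comp t (hσ'.differentiable (by norm_num) (τ t)) (hτ1 t)
    have hdompB : DifferentiableAt ℝ (deriv τ) t := by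
      rw [hτfun]
      exact ((differentiable_const h).sub (hVd.comp hq1)) t
    rw [deriv_fun_mul hdompA hdompB] at hd0
    have hcomp : deriv (fun s => deriv σ (τ s)) t
        = deriv (deriv σ) (τ t) * deriv τ t :=
      deriv_comp t (hσ'.differentiable (by norm_num) (τ t)) (hτ1 t)
    rw [hcomp, hτ' t, hτ'', hσdval] at hd0
    -- hd0 : σ'' * (h - V q t) * (h - V q t) + c * (-S) = 0
    have hc3 : c * (h - V (q t)) = 1 := by
      rw [hc]; field_simp
    have h3 : deriv (deriv σ) (τ t) * ((h - V (q t)) * (h - V (q t))) = c * S := by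
      nlinarith [hd0]
    have h4 : deriv (deriv σ) (τ t)
        * ((h - V (q t)) * (h - V (q t)) * (h - V (q t))) = S := by
      calc deriv (deriv σ) (τ t) * ((h - V (q t)) * (h - V (q t)) * (h - V (q t)))
          = deriv (deriv σ) (τ t) * ((h - V (q t)) * (h - V (q t))) * (h - V (q t)) := by
            ring
        _ = c * S * (h - V (q t)) := by rw [h3]
        _ = S * (c * (h - V (q t))) := by ring
        _ = S := by rw [hc3]; ring
    rw [hc]
    field_simp
    linear_combination h4
  -- definitional rewrites
  have hv_i : ∀ i, deriv (fun s => q s i) t = v i := fun i => rfl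
  have hA_i : ∀ l, pd l V (q t) = A l := fun l => rfl
  have hcW : c * (h - V (q t)) = 1 := by rw [hc]; field_simp
  -- energy identity
  have hE : ∑ i, ∑ j, g (q t) i j * v i * v j = 2 * (h - V (q t)) := by
    have he := henergy t
    simp only [ip] at he
    simp only [hv_i] at he
    linarith
  -- inverse identity
  have hδ : ∀ k j : Fin n, ∑ l, ginv (q t) k l * g (q t) l j
      = (1 : Matrix (Fin n) (Fin n) ℝ) k j := by
    intro k j
    rw [← Matrix.mul_apply, (hinv (q t)).2]
  -- expansion of the Jacobi Christoffel symbols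
  have hpd : ∀ (a l' j' : Fin n), pd a (fun y => (h - V y) * g y l' j') (q t)
      = -(A a) * g (q t) l' j' + (h - V (q t)) * pd a (fun y => g y l' j') (q t) := by
    intro a l' j'
    rw [pd_mul a (fun y => h - V y) (fun y => g y l' j') _ (((differentiable_const h).sub hVd) (q t))
      (((hg l' j').differentiable (by simp)) (q t)), pd_const_sub a V h _ (hVd (q t)), hA_i]
  have hChris : ∀ k i j,
      christoffel (fun y => (h - V y) • g y) (fun y => (h - V y)⁻¹ • ginv y) k i j (q t)
        = christoffel g ginv k i j (q t)
          + (c/2) * (-(A i) * (1 : Matrix (Fin n) (Fin n) ℝ) k j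
              - A j * (1 : Matrix (Fin n) (Fin n) ℝ) k i
              + g (q t) i j * (∑ l, ginv (q t) k l * A l)) := by
    intro k i j
    calc christoffel (fun y => (h - V y) • g y) (fun y => (h - V y)⁻¹ • ginv y) k i j (q t)
        = (1/2) * ∑ l, (ginv (q t) k l *
            (pd i (fun y => g y l j) (q t) + pd j (fun y => g y l i) (q t)
              - pd l (fun y => g y i j) (q t))
          + c * (-(A i) * (ginv (q t) k l * g (q t) l j)
              - A j * (ginv (q t) k l * g (q t) l i)
              + g (q t) i j * (ginv (q t) k l * A l))) := by
          unfold christoffel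
          congr 1
          refine Finset.sum_congr rfl fun l _ => ?_
          simp only [Matrix.smul_apply, smul_eq_mul]
          rw [hpd i l j, hpd j l i, hpd l i j, hc]
          have hcW' : (h - V (q t))⁻¹ * (h - V (q t)) = 1 := by field_simp
          linear_combination (ginv (q t) k l *
            (pd i (fun y => g y l j) (q t) + pd j (fun y => g y l i) (q t)
              - pd l (fun y => g y i j) (q t))) * hcW'
      _ = (1/2) * ((∑ l, ginv (q t) k l *
            (pd i (fun y => g y l j) (q t) + pd j (fun y => g y l i) (q t)
              - pd l (fun y => g y i j) (q t)))
          + c * (-(A i) * (∑ l, ginv (q t) k l * g (q t) l j)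
              - A j * (∑ l, ginv (q t) k l * g (q t) l i)
              + g (q t) i j * (∑ l, ginv (q t) k l * A l))) := by
          rw [Finset.sum_add_distrib]
          congr 1
          rw [← Finset.mul_sum]
          congr 1
          rw [Finset.sum_add_distrib, Finset.sum_sub_distrib,
            ← Finset.mul_sum, ← Finset.mul_sum, ← Finset.mul_sum]
      _ = christoffel g ginv k i j (q t)
          + (c/2) * (-(A i) * (1 : Matrix (Fin n) (Fin n) ℝ) k j
              - A j * (1 : Matrix (Fin n) (Fin n) ℝ) k i
              + g (q t) i j * (∑ l, ginv (q t) k l * A l)) := by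
          rw [hδ k j, hδ k i]
          unfold christoffel
          ring
  refine ⟨fun k => ?_, ?_⟩
  · -- geodesic equation
    rw [hστ t]
    -- second derivative
    have hfun : (fun u => deriv (fun u' => q (σ u') k) u)
        = fun u => deriv (fun s => q s k) (σ u) * deriv σ u := funext (hVel_fun k)
    have h2nd : deriv (fun u => deriv (fun u' => q (σ u') k) u) (τ t)
        = deriv (fun s => deriv (fun s' => q s' k) s) t * (c*c) + v k * (c*c*c*S) := by
      rw [hfun]
      have hdA : DifferentiableAt ℝ (fun u => deriv (fun s => q s k) (σ u)) (τ t) :=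
        DifferentiableAt.comp (τ t) ((hqi' k).differentiable (by norm_num) (σ (τ t))) (hσ1 (τ t))
      have hdB : DifferentiableAt ℝ (deriv σ) (τ t) := hσ'.differentiable (by norm_num) (τ t)
      rw [deriv_fun_mul hdA hdB]
      have hcomp : deriv (fun u => deriv (fun s => q s k) (σ u)) (τ t)
          = deriv (deriv (fun s => q s k)) (σ (τ t)) * deriv σ (τ t) :=
        deriv_comp (τ t) ((hqi' k).differentiable (by norm_num) (σ (τ t))) (hσ1 (τ t))
      rw [hcomp, hστ t, hσdval, hσ'']
      have heta1 : deriv (deriv (fun s => q s k)) t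
          = deriv (fun s => deriv (fun s' => q s' k) s) t := rfl
      have heta2 : deriv (fun s => q s k) t = v k := hv_i k
      rw [heta1, heta2]
      ring
    -- Newton's equation in local variables
    have hN := hNewton t k
    simp only [hv_i, hA_i] at hN
    -- the Christoffel sum
    have hsum : (∑ i, ∑ j,
        christoffel (fun y => (h - V y) • g y) (fun y => (h - V y)⁻¹ • ginv y)
          k i j (q t) *
          deriv (fun u => q (σ u) i) (τ t) * deriv (fun u => q (σ u) j) (τ t))
      = (c*c) * (∑ i, ∑ j, christoffel g ginv k i j (q t) * v i * v j)
        + (-(c*c*c/2)) * ((∑ i, A i * v i) * (∑ j, (1 : Matrix (Fin n) (Fin n) ℝ) k j * v j))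
        + (-(c*c*c/2)) * ((∑ i, (1 : Matrix (Fin n) (Fin n) ℝ) k i * v i) * (∑ j, A j * v j))
        + (c*c*c/2 * (∑ l, ginv (q t) k l * A l)) * (∑ i, ∑ j, g (q t) i j * v i * v j) := by
      calc (∑ i, ∑ j,
          christoffel (fun y => (h - V y) • g y) (fun y => (h - V y)⁻¹ • ginv y)
            k i j (q t) *
            deriv (fun u => q (σ u) i) (τ t) * deriv (fun u => q (σ u) j) (τ t))
          = ∑ i, ∑ j,
            ((c*c) * (christoffel g ginv k i j (q t) * v i * v j)
              + (-(c*c*c/2)) * ((A i * v i) * ((1 : Matrix (Fin n) (Fin n) ℝ) k j * v j))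
              + (-(c*c*c/2)) * (((1 : Matrix (Fin n) (Fin n) ℝ) k i * v i) * (A j * v j))
              + (c*c*c/2 * (∑ l, ginv (q t) k l * A l)) * (g (q t) i j * v i * v j)) := by
            refine Finset.sum_congr rfl fun i _ => Finset.sum_congr rfl fun j _ => ?_
            rw [hChris k i j, hVel i, hVel j]
            ring
        _ = _ := by
            simp only [Finset.sum_add_distrib, ← Finset.mul_sum, ← Finset.sum_mul]
    rw [h2nd, hsum, one_matrix_sum, hE]
    have hSS : ∑ i, A i * v i = S := by
      rw [hS]
      exact Finset.sum_congr rfl fun i _ => mul_comm _ _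
    rw [hSS]
    linear_combination (c*c) * hN + (c*c*(∑ l, ginv (q t) k l * A l)) * hcW
  · -- kinetic energy
    rw [hστ t]
    simp only [ip]
    calc (1/2) * ∑ i, ∑ j, ((h - V (q t)) • g (q t)) i j *
          deriv (fun u => q (σ u) i) (τ t) * deriv (fun u => q (σ u) j) (τ t)
        = (1/2) * ∑ i, ∑ j, ((h - V (q t)) * (c*c)) * (g (q t) i j * v i * v j) := by
          congr 1
          refine Finset.sum_congr rfl fun i _ => Finset.sum_congr rfl fun j _ => ?_
          rw [hVel i, hVel j]
          simp only [Matrix.smul_apply, smul_eq_mul]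
          ring
      _ = (1/2) * (((h - V (q t)) * (c*c)) * ∑ i, ∑ j, g (q t) i j * v i * v j) := by
          simp only [← Finset.mul_sum]
      _ = 1 := by
          rw [hE]
          linear_combination ((h - V (q t)) * c + 1) * hcW
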